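/- For a formal power series w over a ℚ-algebra with invertible constant term a_0 and positive integer m, the sequence (c_k) defined by c_0 = a_0^m and the Miller recurrence c_k = (1/(k·a_0))·Σ_{j=1}^{k} ((m+1)j − k)·a_j·c_{k−j} (k ≥ 1) is the unique sequence of coefficients of any power series v with v·1 = w^m; i.e., Miller's recurrence uniquely determines w^m. -/

import Mathlib

/-!
Writing `v = w ^ m` and `θ = X · d/dX`, the Leibniz rule gives `w · θv = m · θw · v`. Comparing the
coefficients of `X ^ k` yields `∑_{j ≤ k} ((m + 1) j - k) a_j v_{k-j} = 0`, whose `j = 0` term is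
`-k a_0 v_k`; since `k a_0` is a unit this is Miller's recurrence for the coefficients of `w ^ m`.
A recurrence expressing each term through the earlier ones has only one solution with given
initial value.
-/

open PowerSeries Finset

namespace PowerSeries

variable {R : Type*} [CommRing R]

theorem coeff_X_mul_derivative (f : R⟦X⟧) (n : ℕ) :
    coeff n (X * d⁄dX R f) = n * coeff n f := by
  cases n with
  | zero => simp
  | succ n => rw [coeff_succ_X_mul, coeff_derivative]; push_cast; ring

theorem mul_X_mul_derivative_pow (w : R⟦X⟧) (m : ℕ) :
    w * (X * d⁄dX R (w ^ m)) = (m : R⟦X⟧) * ((X * d⁄dX R w) * w ^ m) := by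
  cases m with
  | zero => simp
  | succ m =>
    rw [Derivation.leibniz_pow, Nat.add_sub_cancel, pow_succ]
    simp only [nsmul_eq_mul, smul_eq_mul]
    push_cast
    ring

theorem sum_range_mul_coeff_pow_eq_zero (w : R⟦X⟧) (m k : ℕ) :
    ∑ j ∈ range (k + 1), (((m + 1 : ℤ) * j - k : ℤ) : R) * coeff j w * coeff (k - j) (w ^ m) =
      0 := by
  have h := congrArg (coeff k) (mul_X_mul_derivative_pow w m)
  rw [eq_comm, ← map_natCast (C (R := R)), coeff_C_mul, coeff_mul, coeff_mul,
    Nat.sum_antidiagonal_eq_sum_range_succ (fun i j => coeff i w * coeff j _),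
    Nat.sum_antidiagonal_eq_sum_range_succ (fun i j => coeff i _ * coeff j (w ^ m)), mul_sum,
    ← sub_eq_zero, ← sum_sub_distrib] at h
  rw [← h]
  refine sum_congr rfl fun j hj => ?_
  simp only [coeff_X_mul_derivative, Nat.cast_sub (mem_range_succ_iff.mp hj)]
  push_cast
  ring

theorem coeff_pow_eq_inverse_mul_sum_Icc [Algebra ℚ R] (w : R⟦X⟧) (hunit : IsUnit (coeff 0 w))
    (m : ℕ) {k : ℕ} (hk : 1 ≤ k) :
    coeff k (w ^ m) = Ring.inverse ((k : R) * coeff 0 w) *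
      ∑ j ∈ Icc 1 k, (((m + 1 : ℤ) * j - k : ℤ) : R) * coeff j w * coeff (k - j) (w ^ m) := by
  have hk_unit : IsUnit (k : R) := by
    simpa using (Nat.cast_ne_zero.mpr (by omega : k ≠ 0)).isUnit.map (algebraMap ℚ R)
  have h := sum_range_mul_coeff_pow_eq_zero w m k
  rw [range_eq_Ico, Ico_add_one_right_eq_Icc, ← insert_Icc_add_one_left_eq_Icc (Nat.zero_le k),
    sum_insert (by simp), zero_add] at h
  have hsum : ∑ j ∈ Icc 1 k, (((m + 1 : ℤ) * j - k : ℤ) : R) * coeff j w * coeff (k - j) (w ^ m) =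
      k * coeff 0 w * coeff k (w ^ m) := by
    push_cast at h ⊢
    linear_combination h
  rw [hsum, ← mul_assoc, Ring.inverse_mul_cancel _ (hk_unit.mul hunit), one_mul]

end PowerSeries

theorem eq_of_sum_Icc_recurrence {R : Type*} [Semiring R] (u : ℕ → R) (b : ℕ → ℕ → R)
    {c d : ℕ → R} (h0 : c 0 = d 0)
    (hc : ∀ k, 1 ≤ k → c k = u k * ∑ j ∈ Icc 1 k, b k j * c (k - j))
    (hd : ∀ k, 1 ≤ k → d k = u k * ∑ j ∈ Icc 1 k, b k j * d (k - j)) :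
    c = d := by
  funext k
  induction k using Nat.strong_induction_on with
  | _ k ih =>
    rcases Nat.eq_zero_or_pos k with rfl | hk
    · exact h0
    · rw [hc k hk, hd k hk]
      congr 1
      refine sum_congr rfl fun j hj => ?_
      rw [ih (k - j) (by grind)]

theorem miller_recurrence_unique_general {R : Type*} [CommRing R] [Algebra ℚ R]
    (w : PowerSeries R) (hunit : IsUnit (PowerSeries.coeff (R := R) 0 w))
    (m : ℕ) (a : ℕ → R) (ha : ∀ j, a j = PowerSeries.coeff (R := R) j w)
    (c : ℕ → R) (hc0 : c 0 = a 0 ^ m)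
    (hrec : ∀ k : ℕ, 1 ≤ k →
      c k = Ring.inverse ((k : R) * a 0) *
        ∑ j ∈ Finset.Icc 1 k, ((((m + 1 : ℤ) * j - k : ℤ) : R)) * a j * c (k - j)) :
    ∀ k, c k = PowerSeries.coeff (R := R) k (w ^ m) := by
  obtain rfl : a = fun j => coeff j w := funext ha
  have hcoeff0 : coeff 0 (w ^ m) = coeff 0 w ^ m := by
    simp only [coeff_zero_eq_constantCoeff_apply, map_pow]
  exact congrFun <| eq_of_sum_Icc_recurrence (fun k => Ring.inverse ((k : R) * coeff 0 w))
    (fun k j => (((m + 1 : ℤ) * j - k : ℤ) : R) * coeff j w) (hc0.trans hcoeff0.symm) hrec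
    fun _ hk => coeff_pow_eq_inverse_mul_sum_Icc w hunit m hk

theorem miller_recurrence_unique {R : Type*} [CommRing R] [Algebra ℚ R]
    (w : PowerSeries R) (hunit : IsUnit (PowerSeries.coeff (R := R) 0 w))
    (m : ℕ) (hm : 0 < m) (a : ℕ → R) (ha : ∀ j, a j = PowerSeries.coeff (R := R) j w)
    (c : ℕ → R) (hc0 : c 0 = a 0 ^ m)
    (hrec : ∀ k : ℕ, 1 ≤ k →
      c k = Ring.inverse ((k : R) * a 0) *
        ∑ j ∈ Finset.Icc 1 k, ((((m + 1 : ℤ) * j - k : ℤ) : R)) * a j * c (k - j)) :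
    ∀ k, c k = PowerSeries.coeff (R := R) k (w ^ m) :=
  miller_recurrence_unique_general w hunit m a ha c hc0 hrec
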